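/- The map sending an odd-row RIT-move λ → λ̄ to the Nim position rem(λ̄) is a bijection between the set of positions reachable from λ by an RIT-move on an odd-numbered row and the set of positions reachable from rem(λ) by a single Nim move. -/

import Mathlib

/-- The `j`-th part (0-indexed) of a partition given as a list, `0` beyond the end. -/
def part (l : List ℕ) (j : ℕ) : ℕ := l.getD j 0

/-- A partition: a nonincreasing list of positive integers. -/
def IsPartition (l : List ℕ) : Prop :=
  l.Chain' (· ≥ ·) ∧ ∀ x ∈ l, 0 < x

/-- RIT move: replace the part at (0-indexed) position `i` by a smaller value `v`,
keeping the sequence nonincreasing, then drop the (trailing) zeros. -/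
def RitMove (l l' : List ℕ) : Prop :=
  ∃ i v, i < l.length ∧ v < part l i ∧ (l.set i v).Chain' (· ≥ ·) ∧
    l' = (l.set i v).filter (fun x => x ≠ 0)

/-- RIT move on an odd-numbered row (1-indexed), i.e. an even 0-indexed position. -/
def RitMoveOdd (l l' : List ℕ) : Prop :=
  ∃ i v, i < l.length ∧ i % 2 = 0 ∧ v < part l i ∧ (l.set i v).Chain' (· ≥ ·) ∧
    l' = (l.set i v).filter (fun x => x ≠ 0)

/-- RIT move on an even-numbered row (1-indexed), i.e. an odd 0-indexed position. -/
def RitMoveEven (l l' : List ℕ) : Prop :=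
  ∃ i v, i < l.length ∧ i % 2 = 1 ∧ v < part l i ∧ (l.set i v).Chain' (· ≥ ·) ∧
    l' = (l.set i v).filter (fun x => x ≠ 0)

/-- `core λ = (λ₂, λ₂, λ₄, λ₄, …)` (1-indexed parts), as a `0`-padded sequence. -/
def core (l : List ℕ) : ℕ → ℕ := fun j => part l (2 * (j / 2) + 1)

/-- `rem λ = (λ₁ - λ₂, λ₃ - λ₄, …)` (1-indexed parts), as a `0`-padded sequence. -/
def rem (l : List ℕ) : ℕ → ℕ := fun i => part l (2 * i) - part l (2 * i + 1)

/-- A Nim move strictly decreases exactly one coordinate. -/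
def NimMove (p q : ℕ → ℕ) : Prop := ∃ i, q i < p i ∧ ∀ j, j ≠ i → q j = p j

/-- The nim-sum (bitwise XOR) of the remnant of `l`:
`(λ₁ - λ₂) ⊕ (λ₃ - λ₄) ⊕ ⋯ ⊕ (λ_{2⌈r/2⌉-1} - λ_{2⌈r/2⌉})`. -/
def nimSum (l : List ℕ) : ℕ :=
  (List.ofFn (fun i : Fin ((l.length + 1) / 2) => rem l i)).foldr (· ^^^ ·) 0

/-- The minimal excludant of a set of naturals. -/
noncomputable def mexOf (S : Set ℕ) : ℕ := sInf {n | n ∉ S}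

/-- `G` is the (normal play) Sprague-Grundy function of RIT. -/
def IsRitGrundy (G : List ℕ → ℕ) : Prop :=
  ∀ l, IsPartition l → G l = mexOf {n | ∃ l', RitMove l l' ∧ G l' = n}

/-- `G` is the misère Grundy function of RIT (value `1` at the terminal position). -/
def IsRitMisereGrundy (G : List ℕ → ℕ) : Prop :=
  G [] = 1 ∧ ∀ l, IsPartition l → l ≠ [] →
    G l = mexOf {n | ∃ l', RitMove l l' ∧ G l' = n}

/-- `G` is the misère Grundy function of Nim on `0`-padded sequences of heaps. -/
def IsNimMisereGrundy (G : (ℕ → ℕ) → ℕ) : Prop :=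
  (∀ p : ℕ → ℕ, (∀ i, p i = 0) → G p = 1) ∧
  (∀ p : ℕ → ℕ, (Function.support p).Finite → (∃ i, p i ≠ 0) →
    G p = mexOf {n | ∃ q, NimMove p q ∧ G q = n})

/-- `P` is the set of P-positions of RIT under normal play. -/
def IsRitP (P : List ℕ → Prop) : Prop :=
  ∀ l, IsPartition l → (P l ↔ ∀ l', RitMove l l' → ¬ P l')

/-!
An odd-row move puts some value `v` in row `2m + 1` (the part `part l (2 * m)`). Since `λ` is
nonincreasing, the move is legal exactly when `λ_{2m+2} ≤ v < λ_{2m+1}`, and it changes `rem λ`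
only in coordinate `m`, where `λ_{2m+1} - λ_{2m+2}` becomes `v - λ_{2m+2}`. So the odd-row moves
correspond to the Nim moves on `rem λ`, each determined by its coordinate `m` and new value
`v - λ_{2m+2}`.
-/

open Function

lemma part_eq_zero_of_length_le {l : List ℕ} {i : ℕ} (h : l.length ≤ i) : part l i = 0 :=
  List.getD_eq_default _ _ h

lemma lt_length_of_pos_part {l : List ℕ} {i : ℕ} (h : 0 < part l i) : i < l.length := by
  by_contra hi
  rw [part_eq_zero_of_length_le (not_lt.mp hi)] at h
  exact h.false

lemma part_set {l : List ℕ} {i : ℕ} (hi : i < l.length) (v : ℕ) :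
    part (l.set i v) = update (part l) i v := by
  funext j
  simp only [part, List.getD_eq_getElem?_getD, List.getElem?_set, update_apply]
  by_cases h : j = i
  · simp [h, hi]
  · simp [h, Ne.symm h]

/-- Since the padding value `0` is below every part, a list of naturals is nonincreasing exactly
when its padded sequence of parts is. -/
lemma isChain_ge_iff_antitone_part {l : List ℕ} :
    l.IsChain (· ≥ ·) ↔ Antitone (part l) := by
  constructor
  · intro h
    refine antitone_nat_of_succ_le fun n => ?_
    by_cases hn : n + 1 < l.length
    · simp only [part, List.getD_eq_getElem _ _ hn,
        List.getD_eq_getElem _ _ (Nat.lt_of_succ_lt hn)]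
      exact List.isChain_iff_getElem.mp h n hn
    · rw [part_eq_zero_of_length_le (not_lt.mp hn)]
      exact Nat.zero_le _
  · refine fun h => List.isChain_iff_getElem.mpr fun n hn => ?_
    have := h (Nat.le_succ n)
    rwa [part, part, List.getD_eq_getElem _ _ hn, List.getD_eq_getElem _ _ (Nat.lt_of_succ_lt hn)]
      at this

/-- In a nonincreasing list the zeros form a final block, so deleting them does not change the
padded sequence of parts. -/
lemma part_filter_ne_zero {l : List ℕ} (h : Antitone (part l)) :
    part (l.filter (· ≠ 0)) = part l := by
  induction l with
  | nil => rfl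
  | cons x t ih =>
    have ht : Antitone (part t) := fun a b hab => h (Nat.succ_le_succ hab)
    by_cases hx : x = 0
    · have hzero : ∀ j, part (x :: t) j = 0 := fun j =>
        Nat.eq_zero_of_le_zero (hx ▸ h (Nat.zero_le j))
      funext j
      rw [hzero, List.filter_cons_of_neg (by simpa using hx), ih ht]
      exact hzero (j + 1)
    · rw [List.filter_cons_of_pos (by simpa using hx)]
      funext j
      cases j with
      | zero => rfl
      | succ j => exact congrFun (ih ht) j

lemma Antitone.update_nat {α : Type*} [Preorder α] {f : ℕ → α} (hf : Antitone f)
    {i : ℕ} {a : α} (h₁ : f (i + 1) ≤ a) (h₂ : a ≤ f i) : Antitone (update f i a) := by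
  refine antitone_nat_of_succ_le fun n => ?_
  by_cases hn : n = i
  · subst hn
    rw [update_self, update_of_ne (Nat.succ_ne_self n)]
    exact h₁
  by_cases hn' : n + 1 = i
  · subst hn'
    rw [update_self, update_of_ne hn]
    exact h₂.trans (hf (Nat.le_succ n))
  · rw [update_of_ne hn, update_of_ne hn']
    exact hf (Nat.le_succ n)

lemma eq_and_eq_of_update_eq_update {α β : Type*} [DecidableEq α] {f : α → β}
    {i j : α} {a b : β} (ha : a ≠ f i) (h : update f i a = update f j b) : i = j ∧ a = b := by
  obtain rfl | hij := eq_or_ne i j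
  · exact ⟨rfl, by simpa using congrFun h i⟩
  · have := congrFun h i
    rw [update_self, update_of_ne hij] at this
    exact absurd this ha

lemma nimMove_iff {p q : ℕ → ℕ} : NimMove p q ↔ ∃ i a, a < p i ∧ q = update p i a := by
  constructor
  · rintro ⟨i, hi, hq⟩
    refine ⟨i, q i, hi, funext fun j => ?_⟩
    obtain rfl | hj := eq_or_ne j i
    · simp
    · rw [update_of_ne hj, hq j hj]
  · rintro ⟨i, a, ha, rfl⟩
    exact ⟨i, by simpa using ha, fun j hj => update_of_ne hj _ _⟩

/-- Since `v < part l (2 * m)` keeps the new value below the parts above it, the chain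
condition only constrains `v` against the part below. -/
lemma ritMoveOdd_iff {l l' : List ℕ} (hl : Antitone (part l)) :
    RitMoveOdd l l' ↔ ∃ m v, part l (2 * m + 1) ≤ v ∧ v < part l (2 * m) ∧
      l' = (l.set (2 * m) v).filter (· ≠ 0) := by
  constructor
  · rintro ⟨i, v, hi, hpar, hv, hc, rfl⟩
    obtain ⟨m, rfl⟩ : ∃ m, i = 2 * m := ⟨i / 2, by omega⟩
    refine ⟨m, v, ?_, hv, rfl⟩
    have := isChain_ge_iff_antitone_part.mp hc (Nat.le_succ (2 * m))
    rwa [part_set hi, update_self, update_of_ne (by omega)] at this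
  · rintro ⟨m, v, h₁, h₂, rfl⟩
    have hi := lt_length_of_pos_part (Nat.zero_lt_of_lt h₂)
    refine ⟨2 * m, v, hi, by omega, h₂, isChain_ge_iff_antitone_part.mpr ?_, rfl⟩
    rw [part_set hi]
    exact hl.update_nat h₁ h₂.le

lemma rem_filter_set {l : List ℕ} (hl : Antitone (part l)) {m v : ℕ}
    (h₁ : part l (2 * m + 1) ≤ v) (h₂ : v < part l (2 * m)) :
    rem ((l.set (2 * m) v).filter (· ≠ 0)) = update (rem l) m (v - part l (2 * m + 1)) := by
  have hi := lt_length_of_pos_part (Nat.zero_lt_of_lt h₂)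
  have hpart : part ((l.set (2 * m) v).filter (· ≠ 0)) = update (part l) (2 * m) v := by
    rw [part_filter_ne_zero (by rw [part_set hi]; exact hl.update_nat h₁ h₂.le), part_set hi]
  funext j
  rcases eq_or_ne j m with rfl | hj
  · simp only [rem, hpart, update_self, update_of_ne (by omega : 2 * j + 1 ≠ 2 * j)]
  · simp only [rem, hpart, update_of_ne hj, update_of_ne (by omega : 2 * j ≠ 2 * m),
      update_of_ne (by omega : 2 * j + 1 ≠ 2 * m)]

/-- `rem` is a bijection between odd-row RIT options of `λ`
and Nim options of `rem λ`. -/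
theorem stmt_5 (l : List ℕ) (hl : IsPartition l) :
    Set.BijOn rem {l' | RitMoveOdd l l'} {p | NimMove (rem l) p} := by
  have hmono : Antitone (part l) := isChain_ge_iff_antitone_part.mp hl.1
  refine ⟨?_, ?_, ?_⟩
  · rintro _ h
    obtain ⟨m, v, h₁, h₂, rfl⟩ := (ritMoveOdd_iff hmono).mp h
    refine nimMove_iff.mpr ⟨m, _, ?_, rem_filter_set hmono h₁ h₂⟩
    simp only [rem]
    omega
  · rintro _ h _ h' heq
    obtain ⟨m, v, h₁, h₂, rfl⟩ := (ritMoveOdd_iff hmono).mp h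
    obtain ⟨m', v', h₁', h₂', rfl⟩ := (ritMoveOdd_iff hmono).mp h'
    rw [rem_filter_set hmono h₁ h₂, rem_filter_set hmono h₁' h₂'] at heq
    obtain ⟨rfl, hv⟩ := eq_and_eq_of_update_eq_update (by simp only [rem]; omega) heq
    obtain rfl : v = v' := by omega
    rfl
  · rintro _ hq
    obtain ⟨k, a, ha, rfl⟩ := nimMove_iff.mp hq
    simp only [rem] at ha
    refine ⟨(l.set (2 * k) (a + part l (2 * k + 1))).filter (· ≠ 0),
      (ritMoveOdd_iff hmono).mpr ⟨k, _, by omega, by omega, rfl⟩, ?_⟩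
    rw [rem_filter_set hmono (by omega) (by omega), Nat.add_sub_cancel]
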